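/- Let c be an admissible edge weighting of Q_n. Then: (a) the vectors (ψ_j)_{j ∈ V_n(c)} form an orthonormal basis of ℂ^{U_n(c)} (in particular |V_n(c)| = |U_n(c)|); and (b) the matrices ρ_c(p_x), x a vertex of Q_n, are orthogonal projections satisfying the hypercube relations: the sum of ρ_c(p_x) over all even vertices x equals the identity matrix, the sum over all odd vertices equals the identity matrix, and ρ_c(p_i)·ρ_c(p_j) = 0 whenever i is even, j is odd and {i,j} is not an edge of Q_n. -/

import Mathlib

open scoped Classical

noncomputable section

/-- Adjacency in the hypercube `Q_n`: differ in exactly one coordinate. -/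
def hcAdj {n : ℕ} (x y : Fin n → Bool) : Prop :=
  (Finset.univ.filter (fun k => x k ≠ y k)).card = 1

/-- Flip the `k`-th coordinate. -/
def hcFlip {n : ℕ} (x : Fin n → Bool) (k : Fin n) : Fin n → Bool :=
  Function.update x k (!x k)

/-- A vertex of `Q_n` is even if it has an even number of coordinates equal to `true`. -/
def hcEven {n : ℕ} (x : Fin n → Bool) : Prop :=
  (Finset.univ.filter (fun k => x k = true)).card % 2 = 0

/-- `i` belongs to `U_n(c)`: `i` is even and incident to an edge of nonzero weight. -/
def inU {n : ℕ} (c : (Fin n → Bool) → (Fin n → Bool) → ℂ) (i : Fin n → Bool) : Prop :=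
  hcEven i ∧ ∃ j, hcAdj i j ∧ c i j ≠ 0

/-- `j` belongs to `V_n(c)`: `j` is odd and incident to an edge of nonzero weight. -/
def inV {n : ℕ} (c : (Fin n → Bool) → (Fin n → Bool) → ℂ) (j : Fin n → Bool) : Prop :=
  ¬ hcEven j ∧ ∃ i, hcAdj i j ∧ c i j ≠ 0

/-- An edge weighting `c` of `Q_n` (with `c i j` the weight of the edge `{i,j}`,
`i` even, `j` odd) is admissible. -/
def Admissible {n : ℕ} (c : (Fin n → Bool) → (Fin n → Bool) → ℂ) : Prop :=
  (∀ j₁, inV c j₁ → ∀ j₂, inV c j₂ →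
    ∑ i ∈ Finset.univ.filter (fun i => hcEven i ∧ hcAdj i j₁ ∧ hcAdj i j₂),
      c i j₁ * (starRingEnd ℂ) (c i j₂) = if j₁ = j₂ then 1 else 0) ∧
  (∀ i₁, inU c i₁ → ∀ i₂, inU c i₂ →
    ∑ j ∈ Finset.univ.filter (fun j => ¬ hcEven j ∧ hcAdj i₁ j ∧ hcAdj i₂ j),
      c i₁ j * (starRingEnd ℂ) (c i₂ j) = if i₁ = i₂ then 1 else 0)

/-- The finite set `U_n(c)` of supported even vertices. -/
def UFin {n : ℕ} (c : (Fin n → Bool) → (Fin n → Bool) → ℂ) : Finset (Fin n → Bool) :=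
  Finset.univ.filter (inU c)

/-- The finite set `V_n(c)` of supported odd vertices. -/
def VFin {n : ℕ} (c : (Fin n → Bool) → (Fin n → Bool) → ℂ) : Finset (Fin n → Bool) :=
  Finset.univ.filter (inV c)

/-- For an odd vertex `j`, the vector `ψ_j ∈ ℂ^{U_n(c)}` whose `i`-th entry is `c i j`
if `{i,j}` is an edge of `Q_n` and `0` otherwise. -/
def psi {n : ℕ} (c : (Fin n → Bool) → (Fin n → Bool) → ℂ) (j : Fin n → Bool) :
    EuclideanSpace ℂ {i : Fin n → Bool // i ∈ UFin c} :=
  WithLp.toLp 2 (fun i => if hcAdj i.1 j then c i.1 j else 0)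

/-- The representation `ρ_c`: an even vertex `i ∈ U_n(c)` is sent to the matrix unit
`E_{ii}`, an odd vertex `j ∈ V_n(c)` to the orthogonal projection onto the span of the
unit vector `ψ_j` (the rank-one matrix `ψ_j ψ_j^*`), and every other vertex to `0`. -/
def rhoRep {n : ℕ} (c : (Fin n → Bool) → (Fin n → Bool) → ℂ) (x : Fin n → Bool) :
    Matrix {i : Fin n → Bool // i ∈ UFin c} {i : Fin n → Bool // i ∈ UFin c} ℂ :=
  if hcEven x then (fun i i' => if i.1 = x ∧ i'.1 = x then 1 else 0)
  else (fun i i' => psi c x i * (starRingEnd ℂ) (psi c x i'))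

-- auxiliary

lemma hcAdj_exists {n : ℕ} {x y : Fin n → Bool} (h : hcAdj x y) :
    ∃ k, x k ≠ y k ∧ ∀ l, l ≠ k → x l = y l := by
  obtain ⟨k, hk⟩ := Finset.card_eq_one.mp h
  refine ⟨k, ?_, ?_⟩
  · have : k ∈ Finset.univ.filter (fun k => x k ≠ y k) := hk ▸ Finset.mem_singleton_self k
    simpa using this
  · intro l hl
    by_contra hne
    have : l ∈ Finset.univ.filter (fun k => x k ≠ y k) := by simpa using hne
    rw [hk, Finset.mem_singleton] at this
    exact hl this

def hcPar {n : ℕ} (x : Fin n → Bool) : ZMod 2 := ∑ k, if x k then 1 else 0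

lemma hcEven_iff {n : ℕ} (x : Fin n → Bool) : hcEven x ↔ hcPar x = 0 := by
  have hcast : (((Finset.univ.filter (fun k => x k = true)).card : ℕ) : ZMod 2) = hcPar x := by
    rw [Finset.card_filter, Nat.cast_sum]
    exact Finset.sum_congr rfl fun k _ => by by_cases h : x k <;> simp [h]
  unfold hcEven
  rw [← hcast, ZMod.natCast_eq_zero_iff, Nat.dvd_iff_mod_eq_zero]

lemma hcPar_adj {n : ℕ} {x y : Fin n → Bool} (h : hcAdj x y) : hcPar y = hcPar x + 1 := by
  obtain ⟨k, hk, hl⟩ := hcAdj_exists h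
  unfold hcPar
  have key : ∀ l, (if y l then (1 : ZMod 2) else 0)
      = (if x l then 1 else 0) + (if l = k then 1 else 0) := by
    intro l
    by_cases hlk : l = k
    · subst hlk
      cases hx : x l <;> cases hy : y l <;> simp [hx, hy] at hk ⊢ <;> decide
    · rw [← hl l hlk]; simp [hlk]
  rw [Finset.sum_congr rfl (fun l _ => key l), Finset.sum_add_distrib,
    Finset.sum_ite_eq' Finset.univ k (fun _ => (1 : ZMod 2))]
  simp

lemma hcAdj_parity {n : ℕ} {x y : Fin n → Bool} (h : hcAdj x y) : hcEven x ↔ ¬ hcEven y := by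
  rw [hcEven_iff, hcEven_iff, hcPar_adj h]
  generalize hcPar x = a
  revert a; decide

lemma mem_UFin {n : ℕ} {c : (Fin n → Bool) → (Fin n → Bool) → ℂ} {i : Fin n → Bool} :
    i ∈ UFin c ↔ inU c i := by simp [UFin]

lemma mem_VFin {n : ℕ} {c : (Fin n → Bool) → (Fin n → Bool) → ℂ} {j : Fin n → Bool} :
    j ∈ VFin c ↔ inV c j := by simp [VFin]

/-- Column orthonormality. -/
lemma psi_inner {n : ℕ} {c : (Fin n → Bool) → (Fin n → Bool) → ℂ} (hadm : Admissible c)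
    {j₁ j₂ : Fin n → Bool} (h₁ : inV c j₁) (h₂ : inV c j₂) :
    ∑ i : {i : Fin n → Bool // i ∈ UFin c},
      (starRingEnd ℂ) (psi c j₁ i) * psi c j₂ i = if j₁ = j₂ then 1 else 0 := by
  have key := hadm.1 j₂ h₂ j₁ h₁
  have h1 : (∑ i : {i : Fin n → Bool // i ∈ UFin c},
        (starRingEnd ℂ) (psi c j₁ i) * psi c j₂ i)
      = ∑ i ∈ UFin c, (starRingEnd ℂ) (if hcAdj i j₁ then c i j₁ else 0)
          * (if hcAdj i j₂ then c i j₂ else 0) :=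
    Finset.sum_coe_sort (UFin c)
      (fun i => (starRingEnd ℂ) (if hcAdj i j₁ then c i j₁ else 0)
        * (if hcAdj i j₂ then c i j₂ else 0))
  rw [h1]
  have h2 : (∑ i ∈ UFin c, (starRingEnd ℂ) (if hcAdj i j₁ then c i j₁ else 0)
        * (if hcAdj i j₂ then c i j₂ else 0))
      = ∑ i, (starRingEnd ℂ) (if hcAdj i j₁ then c i j₁ else 0)
          * (if hcAdj i j₂ then c i j₂ else 0) := by
    apply Finset.sum_subset (Finset.subset_univ _)
    intro x _ hx
    rw [mem_UFin] at hx
    by_cases hadj : hcAdj x j₁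
    · have hev : hcEven x := (hcAdj_parity hadj).mpr h₁.1
      have hc : c x j₁ = 0 := by
        by_contra hc
        exact hx ⟨hev, j₁, hadj, hc⟩
      simp [hadj, hc]
    · simp [hadj]
  rw [h2]
  rw [Finset.sum_filter] at key
  have h3 : (∑ i, (starRingEnd ℂ) (if hcAdj i j₁ then c i j₁ else 0)
        * (if hcAdj i j₂ then c i j₂ else 0))
      = ∑ i, if hcEven i ∧ hcAdj i j₂ ∧ hcAdj i j₁ then
          c i j₂ * (starRingEnd ℂ) (c i j₁) else 0 := by
    apply Finset.sum_congr rfl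
    intro i _
    by_cases ha1 : hcAdj i j₁
    · by_cases ha2 : hcAdj i j₂
      · have hev : hcEven i := (hcAdj_parity ha1).mpr h₁.1
        simp only [ha1, ha2, hev, if_true, true_and, and_self]
        ring
      · simp [ha1, ha2]
    · simp [ha1]
  rw [h3, key]
  simp [eq_comm]

/-- Row orthonormality, summed over all odd vertices. -/
lemma row_sum {n : ℕ} {c : (Fin n → Bool) → (Fin n → Bool) → ℂ} (hadm : Admissible c)
    {i₁ i₂ : Fin n → Bool} (h₁ : inU c i₁) (h₂ : inU c i₂) :
    ∑ x ∈ Finset.univ.filter (fun x => ¬ hcEven x),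
      (if hcAdj i₁ x then c i₁ x else 0) * (starRingEnd ℂ) (if hcAdj i₂ x then c i₂ x else 0)
      = if i₁ = i₂ then 1 else 0 := by
  have key := hadm.2 i₁ h₁ i₂ h₂
  rw [Finset.sum_filter] at key ⊢
  rw [← key]
  apply Finset.sum_congr rfl
  intro x _
  by_cases he : hcEven x
  · simp [he]
  · by_cases ha1 : hcAdj i₁ x
    · by_cases ha2 : hcAdj i₂ x
      · simp [he, ha1, ha2]
      · simp [he, ha1, ha2]
    · simp [he, ha1]

lemma rankOne_herm {ι : Type*} [Fintype ι] [DecidableEq ι] (v : ι → ℂ) :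
    Matrix.IsHermitian (Matrix.of fun i i' => v i * (starRingEnd ℂ) (v i')) := by
  unfold Matrix.IsHermitian
  ext i i'
  simp [Matrix.conjTranspose_apply, mul_comm]

lemma rankOne_idem {ι : Type*} [Fintype ι] [DecidableEq ι] (v : ι → ℂ)
    (h : (∑ i, (starRingEnd ℂ) (v i) * v i) = 1 ∨ ∀ i, v i = 0) :
    (Matrix.of fun i i' => v i * (starRingEnd ℂ) (v i'))
      * (Matrix.of fun i i' => v i * (starRingEnd ℂ) (v i'))
      = (Matrix.of fun i i' => v i * (starRingEnd ℂ) (v i')) := by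
  ext i i'
  rw [Matrix.mul_apply]
  have step : ∀ k ∈ Finset.univ,
      (Matrix.of fun i i' => v i * (starRingEnd ℂ) (v i')) i k
        * (Matrix.of fun i i' => v i * (starRingEnd ℂ) (v i')) k i'
      = v i * (starRingEnd ℂ) (v i') * ((starRingEnd ℂ) (v k) * v k) := fun k _ => by
    simp only [Matrix.of_apply]; ring
  rw [Finset.sum_congr rfl step, ← Finset.mul_sum]
  rcases h with h | h
  · rw [h, mul_one]; simp
  · simp [h]

/-- Row orthonormality, summed over the subtype of `VFin`. -/
lemma row_sum' {n : ℕ} {c : (Fin n → Bool) → (Fin n → Bool) → ℂ} (hadm : Admissible c)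
    {i₁ i₂ : Fin n → Bool} (h₁ : inU c i₁) (h₂ : inU c i₂) :
    ∑ x : {j : Fin n → Bool // j ∈ VFin c},
      (if hcAdj i₁ x.1 then c i₁ x.1 else 0)
        * (starRingEnd ℂ) (if hcAdj i₂ x.1 then c i₂ x.1 else 0)
      = if i₁ = i₂ then 1 else 0 := by
  have h1 : (∑ x : {j : Fin n → Bool // j ∈ VFin c},
        (if hcAdj i₁ x.1 then c i₁ x.1 else 0)
          * (starRingEnd ℂ) (if hcAdj i₂ x.1 then c i₂ x.1 else 0))
      = ∑ x ∈ VFin c, (if hcAdj i₁ x then c i₁ x else 0)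
          * (starRingEnd ℂ) (if hcAdj i₂ x then c i₂ x else 0) :=
    Finset.sum_coe_sort (VFin c)
      (fun x => (if hcAdj i₁ x then c i₁ x else 0)
        * (starRingEnd ℂ) (if hcAdj i₂ x then c i₂ x else 0))
  rw [h1]
  rw [← row_sum hadm h₁ h₂]
  apply Finset.sum_subset
  · intro x hx
    rw [mem_VFin] at hx
    simp only [Finset.mem_filter, Finset.mem_univ, true_and]
    exact hx.1
  · intro x hx hx'
    rw [Finset.mem_filter] at hx
    rw [mem_VFin] at hx'
    by_cases hadj : hcAdj i₁ x
    · have hc : c i₁ x = 0 := by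
        by_contra hc
        exact hx' ⟨hx.2, i₁, hadj, hc⟩
      simp [hadj, hc]
    · simp [hadj]


lemma rhoRep_apply {n : ℕ} (c : (Fin n → Bool) → (Fin n → Bool) → ℂ) (x : Fin n → Bool)
    (i i' : {i : Fin n → Bool // i ∈ UFin c}) :
    rhoRep c x i i' = if hcEven x then (if i.1 = x ∧ i'.1 = x then 1 else 0)
      else psi c x i * (starRingEnd ℂ) (psi c x i') := by
  by_cases h : hcEven x
  · have e : rhoRep c x = (fun i i' => if i.1 = x ∧ i'.1 = x then (1:ℂ) else 0 :
        Matrix {i : Fin n → Bool // i ∈ UFin c} {i : Fin n → Bool // i ∈ UFin c} ℂ) := by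
      unfold rhoRep; exact if_pos h
    rw [e, if_pos h]
  · have e : rhoRep c x = (fun i i' => psi c x i * (starRingEnd ℂ) (psi c x i') :
        Matrix {i : Fin n → Bool // i ∈ UFin c} {i : Fin n → Bool // i ∈ UFin c} ℂ) := by
      unfold rhoRep; exact if_neg h
    rw [e, if_neg h]

open Matrix

/-- For an admissible edge weighting `c` of `Q_n`:
(a) the vectors `(ψ_j)_{j ∈ V_n(c)}` form an orthonormal basis of `ℂ^{U_n(c)}`
(in particular `|V_n(c)| = |U_n(c)|`); and
(b) the matrices `ρ_c(p_x)` are orthogonal projections satisfying the hypercube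
relations (GP1) and (GP2). -/
theorem admissible_weighting_induces_representation {n : ℕ} (hn : 1 ≤ n)
    (c : (Fin n → Bool) → (Fin n → Bool) → ℂ) (hadm : Admissible c) :
    (∃ b : OrthonormalBasis {j : Fin n → Bool // j ∈ VFin c} ℂ
        (EuclideanSpace ℂ {i : Fin n → Bool // i ∈ UFin c}),
      ∀ j, b j = psi c j.1) ∧
    Fintype.card {j : Fin n → Bool // j ∈ VFin c}
      = Fintype.card {i : Fin n → Bool // i ∈ UFin c} ∧
    (∀ x, (rhoRep c x).IsHermitian ∧ rhoRep c x * rhoRep c x = rhoRep c x) ∧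
    ∑ x ∈ Finset.univ.filter (fun x => hcEven x), rhoRep c x = 1 ∧
    ∑ x ∈ Finset.univ.filter (fun x => ¬ hcEven x), rhoRep c x = 1 ∧
    (∀ i j, hcEven i → ¬ hcEven j → ¬ hcAdj i j → rhoRep c i * rhoRep c j = 0) := by
  -- the rectangular matrix with orthonormal rows and columns
  set M := (Matrix.of (fun i j => if hcAdj i.1 j.1 then c i.1 j.1 else 0) :
    Matrix {i : Fin n → Bool // i ∈ UFin c} {j : Fin n → Bool // j ∈ VFin c} ℂ) with hM
  have hMHM : Mᴴ * M = 1 := by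
    ext j₁ j₂
    rw [Matrix.mul_apply, Matrix.one_apply]
    have h := psi_inner hadm (mem_VFin.mp j₁.2) (mem_VFin.mp j₂.2)
    calc (∑ k, Mᴴ j₁ k * M k j₂)
        = ∑ k : {i : Fin n → Bool // i ∈ UFin c},
            (starRingEnd ℂ) (psi c j₁.1 k) * psi c j₂.1 k := rfl
      _ = if j₁.1 = j₂.1 then 1 else 0 := h
      _ = if j₁ = j₂ then 1 else 0 := by simp only [Subtype.val_inj]
  have hMMH : M * Mᴴ = 1 := by
    ext i₁ i₂
    rw [Matrix.mul_apply, Matrix.one_apply]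
    have h := row_sum' hadm (mem_UFin.mp i₁.2) (mem_UFin.mp i₂.2)
    calc (∑ k, M i₁ k * Mᴴ k i₂)
        = ∑ x : {j : Fin n → Bool // j ∈ VFin c},
            (if hcAdj i₁.1 x.1 then c i₁.1 x.1 else 0)
              * (starRingEnd ℂ) (if hcAdj i₂.1 x.1 then c i₂.1 x.1 else 0) := rfl
      _ = if i₁.1 = i₂.1 then 1 else 0 := h
      _ = if i₁ = i₂ then 1 else 0 := by simp only [Subtype.val_inj]
  have hcard : Fintype.card {j : Fin n → Bool // j ∈ VFin c}
      = Fintype.card {i : Fin n → Bool // i ∈ UFin c} := by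
    have t1 : (M * Mᴴ).trace = (Mᴴ * M).trace := Matrix.trace_mul_comm M Mᴴ
    rw [hMMH, hMHM, Matrix.trace_one, Matrix.trace_one] at t1
    exact_mod_cast t1.symm
  -- orthonormality of the ψ family
  have hon : Orthonormal ℂ (fun j : {j : Fin n → Bool // j ∈ VFin c} => psi c j.1) := by
    rw [orthonormal_iff_ite]
    intro j₁ j₂
    have h := psi_inner hadm (mem_VFin.mp j₁.2) (mem_VFin.mp j₂.2)
    calc (inner ℂ (psi c j₁.1) (psi c j₂.1) : ℂ)
        = ∑ k : {i : Fin n → Bool // i ∈ UFin c},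
            (starRingEnd ℂ) (psi c j₁.1 k) * psi c j₂.1 k := by
          simp [PiLp.inner_apply, RCLike.inner_apply, mul_comm]
      _ = if j₁.1 = j₂.1 then 1 else 0 := h
      _ = if j₁ = j₂ then 1 else 0 := by simp only [Subtype.val_inj]
  have hspan : ⊤ ≤ Submodule.span ℂ
      (Set.range (fun j : {j : Fin n → Bool // j ∈ VFin c} => psi c j.1)) := by
    have := hon.linearIndependent.span_eq_top_of_card_eq_finrank'
      (by rw [hcard, finrank_euclideanSpace])
    exact this.ge
  refine ⟨⟨OrthonormalBasis.mk hon hspan, fun j => by rw [OrthonormalBasis.coe_mk]⟩,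
    hcard, ?_, ?_, ?_, ?_⟩
  · -- Hermitian and idempotent
    intro x
    by_cases hx : hcEven x
    · set v : {i : Fin n → Bool // i ∈ UFin c} → ℂ :=
        fun i => if i.1 = x then 1 else 0 with hv
      have hrho : rhoRep c x = Matrix.of (fun i i' => v i * (starRingEnd ℂ) (v i')) := by
        funext i i'
        simp only [rhoRep_apply, hx, if_true, Matrix.of_apply, hv]
        by_cases h1 : i.1 = x <;> by_cases h2 : i'.1 = x <;> simp [h1, h2]
      have hcond : (∑ i, (starRingEnd ℂ) (v i) * v i) = 1 ∨ ∀ i, v i = 0 := by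
        by_cases hxU : x ∈ UFin c
        · left
          have : ∀ i : {i : Fin n → Bool // i ∈ UFin c},
              (starRingEnd ℂ) (v i) * v i = if i = ⟨x, hxU⟩ then 1 else 0 := by
            intro i
            by_cases h : i.1 = x
            · simp [hv, h, Subtype.ext_iff]
            · simp [hv, h, Subtype.ext_iff]
          rw [Finset.sum_congr rfl (fun i _ => this i)]
          simp
        · right
          intro i
          simp only [hv]
          rw [if_neg]
          intro h
          exact hxU (h ▸ i.2)
      rw [hrho]
      exact ⟨rankOne_herm v, rankOne_idem v hcond⟩
    · have hrho : rhoRep c x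
          = Matrix.of (fun i i' => psi c x i * (starRingEnd ℂ) (psi c x i')) := by
        funext i i'
        simp only [rhoRep_apply, hx, if_false, Matrix.of_apply]
      have hcond : (∑ i, (starRingEnd ℂ) (psi c x i) * psi c x i) = 1
          ∨ ∀ i, psi c x i = 0 := by
        by_cases hxV : inV c x
        · left
          have h := psi_inner hadm hxV hxV
          simpa using h
        · right
          intro i
          show (if hcAdj i.1 x then c i.1 x else 0) = 0
          by_cases hadj : hcAdj i.1 x
          · rw [if_pos hadj]
            by_contra hc
            exact hxV ⟨hx, i.1, hadj, hc⟩
          · rw [if_neg hadj]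
      rw [hrho]
      exact ⟨rankOne_herm _, rankOne_idem _ hcond⟩
  · -- sum over even vertices is 1
    ext i i'
    rw [Matrix.sum_apply, Matrix.one_apply]
    have hie : hcEven i.1 := (mem_UFin.mp i.2).1
    have step : ∀ x ∈ Finset.univ.filter (fun x => hcEven x),
        rhoRep c x i i' = if x = i.1 then (if i'.1 = i.1 then (1:ℂ) else 0) else 0 := by
      intro x hx
      rw [Finset.mem_filter] at hx
      simp only [rhoRep_apply, hx.2, if_true]
      by_cases hxi : x = i.1
      · subst hxi; simp
      · rw [if_neg hxi, if_neg]
        intro h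
        exact hxi h.1.symm
    rw [Finset.sum_congr rfl step, Finset.sum_ite_eq']
    have hmem : i.1 ∈ Finset.univ.filter (fun x => hcEven x) := by
      simp [hie]
    rw [if_pos hmem]
    by_cases h : i = i'
    · subst h; simp
    · rw [if_neg h, if_neg]
      intro h'
      exact h (Subtype.ext h'.symm)
  · -- sum over odd vertices is 1
    ext i i'
    rw [Matrix.sum_apply, Matrix.one_apply]
    have h := row_sum hadm (mem_UFin.mp i.2) (mem_UFin.mp i'.2)
    have step : ∀ x ∈ Finset.univ.filter (fun x => ¬ hcEven x),
        rhoRep c x i i' = (if hcAdj i.1 x then c i.1 x else 0)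
          * (starRingEnd ℂ) (if hcAdj i'.1 x then c i'.1 x else 0) := by
      intro x hx
      rw [Finset.mem_filter] at hx
      simp only [rhoRep_apply, hx.2, if_false]
      rfl
    rw [Finset.sum_congr rfl step, h]
    by_cases hii : i = i'
    · subst hii; simp
    · rw [if_neg hii, if_neg]
      intro h'
      exact hii (Subtype.ext h')
  · -- GP2
    intro i j hi hj hij
    ext a b
    rw [Matrix.mul_apply, Matrix.zero_apply]
    apply Finset.sum_eq_zero
    intro k _
    simp only [rhoRep_apply, hi, hj, if_true, if_false]
    by_cases hk : k.1 = i
    · have : psi c j k = 0 := by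
        show (if hcAdj k.1 j then c k.1 j else 0) = 0
        rw [if_neg]
        rw [hk]
        exact hij
      rw [this]
      ring
    · rw [if_neg]
      · ring
      · intro h
        exact hk h.2
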